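/- arXiv:2206.08860 — 7 statements merged into one kernel-verified Lean document; each statement's English description precedes it below -/
import Mathlib

section
/- Let G be a finite simple graph and let x, y be vertices of G at graph distance d such that there is exactly one path of length d in G joining x and y. Then q(G) ≥ d + 1. -/
/-!
For `A ∈ S(G)` and `k < d = dist x y`, the `(x, y)` entry of `A ^ k` is a sum over walks of
length `k` from `x` to `y`, so it vanishes, while the `(x, y)` entry of `A ^ d` reduces to the
product of the edge weights along the unique geodesic, so it does not. A symmetric matrix with
`q` distinct eigenvalues is annihilated by the monic polynomial `∏ (X - μ)` of degree `q`, so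
every power of `A` is a combination of `1, A, …, A ^ (q - 1)`; if `q ≤ d`, this would force the
`(x, y)` entry of `A ^ d` to vanish.
-/

open Matrix

/-- `SOfGraph G` is the set of real symmetric matrices whose off-diagonal zero
pattern is described by the graph `G` (diagonal entries unrestricted). -/
def SOfGraph {V : Type*} [Fintype V] [DecidableEq V] (G : SimpleGraph V) :
    Set (Matrix V V ℝ) :=
  {A | A.IsSymm ∧ ∀ i j : V, i ≠ j → (A i j ≠ 0 ↔ G.Adj i j)}

/-- `qGraph G` is the minimum number of distinct eigenvalues over matrices in `SOfGraph G`. -/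
noncomputable def qGraph {V : Type*} [Fintype V] [DecidableEq V] (G : SimpleGraph V) : ℕ :=
  sInf ((fun A => (spectrum ℝ A).ncard) '' SOfGraph G)

/-- Eccentricity of a vertex: maximum graph distance to any vertex. -/
noncomputable def graphEccent {V : Type*} [Fintype V] (G : SimpleGraph V) (v : V) : ℕ :=
  Finset.univ.sup fun w => G.dist v w

/-- Double-ended candle `G_k` on `2k` vertices: vertex `i` lies in level `(i+1)/2`,
so level `0` and level `k` have one vertex each and intermediate levels have two;
two vertices are adjacent iff they lie in consecutive levels. -/
def doubleCandle (k : ℕ) : SimpleGraph (Fin (2 * k)) :=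
  SimpleGraph.fromRel fun a b => (a.val + 1) / 2 + 1 = (b.val + 1) / 2

/-- Single-ended candle `G'_k` on `2k+1` vertices: vertex `i` lies in level `(i+1)/2`,
so level `0` has one vertex and levels `1,…,k` have two vertices each; two distinct
vertices are adjacent iff they lie in consecutive levels or both lie in level `k`. -/
def singleCandle (k : ℕ) : SimpleGraph (Fin (2 * k + 1)) :=
  SimpleGraph.fromRel fun a b =>
    (a.val + 1) / 2 + 1 = (b.val + 1) / 2 ∨ ((a.val + 1) / 2 = k ∧ (b.val + 1) / 2 = k)

open Polynomial

theorem Matrix.pow_apply_eq_zero_of_aeval_eq_zero {n R : Type*} [Fintype n] [DecidableEq n]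
    [CommRing R] [Nontrivial R] {A : Matrix n n R} {p : R[X]} (hp : p.Monic)
    (hAp : aeval A p = 0) {i j : n} (h : ∀ k < p.natDegree, (A ^ k) i j = 0) (m : ℕ) :
    (A ^ m) i j = 0 := by
  set r := X ^ m %ₘ p
  have hAm : A ^ m = aeval A r := by
    rw [aeval_modByMonic_eq_self_of_root hAp, map_pow, aeval_X]
  rw [hAm, aeval_eq_sum_range, Matrix.sum_apply]
  refine Finset.sum_eq_zero fun k _ => ?_
  by_cases hk : r.coeff k = 0
  · simp [hk]
  have hr : r ≠ 0 := fun h => hk (by simp [h])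
  have hkp : k < p.natDegree :=
    (le_natDegree_of_ne_zero hk).trans_lt
      (natDegree_lt_natDegree hr (degree_modByMonic_lt _ hp))
  rw [Matrix.smul_apply, h k hkp, smul_zero]

theorem IsSelfAdjoint.aeval_prod_X_sub_C_spectrum {A : Type*} [Ring A] [StarRing A]
    [Algebra ℝ A] [TopologicalSpace A] [ContinuousFunctionalCalculus ℝ A IsSelfAdjoint] {a : A}
    (ha : IsSelfAdjoint a) (hfin : (spectrum ℝ a).Finite) :
    aeval a (∏ μ ∈ hfin.toFinset, (X - C μ)) = 0 := by
  rw [← cfc_polynomial _ a ha, ← cfc_zero ℝ a]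
  refine cfc_congr fun μ hμ => ?_
  rw [eval_prod, Pi.zero_apply]
  exact Finset.prod_eq_zero (hfin.mem_toFinset.mpr hμ) (by simp)

theorem Matrix.IsHermitian.lt_ncard_spectrum_of_pow_apply {n : Type*} [Fintype n]
    [DecidableEq n] {A : Matrix n n ℝ} (hA : A.IsHermitian) {i j : n} {m : ℕ}
    (hzero : ∀ k < m, (A ^ k) i j = 0) (hne : (A ^ m) i j ≠ 0) :
    m < (spectrum ℝ A).ncard := by
  by_contra! hle
  have hfin := A.finite_spectrum
  have hmonic : (∏ μ ∈ hfin.toFinset, (X - C μ)).Monic :=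
    monic_prod_of_monic _ _ fun μ _ => monic_X_sub_C μ
  refine hne (pow_apply_eq_zero_of_aeval_eq_zero hmonic
    (hA.isSelfAdjoint.aeval_prod_X_sub_C_spectrum hfin) (fun k hk => hzero k ?_) m)
  rw [natDegree_prod_of_monic _ _ fun μ _ => monic_X_sub_C μ] at hk
  simp only [natDegree_X_sub_C, Finset.sum_const, smul_eq_mul, mul_one] at hk
  rw [Set.ncard_eq_toFinset_card _ hfin] at hle
  omega

namespace SimpleGraph

variable {V R : Type*} {G : SimpleGraph V} {A : Matrix V V R}

theorem exists_walk_length_le_of_pow_apply_ne_zero [Fintype V] [DecidableEq V] [Semiring R]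
    (hA : ∀ i j, i ≠ j → A i j ≠ 0 → G.Adj i j) {k : ℕ} {x y : V}
    (h : (A ^ k) x y ≠ 0) :
    ∃ w : G.Walk x y, w.length ≤ k := by
  induction k generalizing x with
  | zero =>
    obtain rfl : x = y := by_contra fun hxy => h (by simp [Matrix.one_apply_ne hxy])
    exact ⟨.nil, le_rfl⟩
  | succ k ih =>
    rw [pow_succ', Matrix.mul_apply] at h
    obtain ⟨z, -, hz⟩ := Finset.exists_ne_zero_of_sum_ne_zero h
    obtain ⟨w, hw⟩ := ih (right_ne_zero_of_mul hz)
    by_cases hzx : x = z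
    · subst hzx
      exact ⟨w, by omega⟩
    · exact ⟨.cons (hA x z hzx (left_ne_zero_of_mul hz)) w, by simp [hw]⟩

theorem pow_apply_eq_zero_of_lt_dist [Fintype V] [DecidableEq V] [Semiring R]
    (hA : ∀ i j, i ≠ j → A i j ≠ 0 → G.Adj i j) {k : ℕ} {x y : V}
    (hk : k < G.dist x y) : (A ^ k) x y = 0 := by
  by_contra h
  obtain ⟨w, hw⟩ := exists_walk_length_le_of_pow_apply_ne_zero hA h
  have := G.dist_le w
  omega

theorem Walk.eq_of_length_le_dist {x y : V}
    (huniq : ∃! p : G.Walk x y, p.IsPath ∧ p.length = G.dist x y) {q r : G.Walk x y}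
    (hq : q.length ≤ G.dist x y) (hr : r.length ≤ G.dist x y) : q = r := by
  have hq' : q.length = G.dist x y := le_antisymm hq (G.dist_le q)
  have hr' : r.length = G.dist x y := le_antisymm hr (G.dist_le r)
  exact huniq.unique ⟨q.isPath_of_length_eq_dist hq', hq'⟩
    ⟨r.isPath_of_length_eq_dist hr', hr'⟩

theorem existsUnique_path_of_cons {x u y : V} {hxu : G.Adj x u} {p : G.Walk u y}
    (huniq : ∃! q : G.Walk x y, q.IsPath ∧ q.length = G.dist x y)
    (hp : (Walk.cons hxu p).length = G.dist x y) :
    ∃! q : G.Walk u y, q.IsPath ∧ q.length = G.dist u y := by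
  have hpu := length_eq_dist_of_subwalk hp (p.isSubwalk_cons hxu)
  refine ⟨p, ⟨p.isPath_of_length_eq_dist hpu, hpu⟩, fun q hq => ?_⟩
  have := Walk.eq_of_length_le_dist huniq (q := .cons hxu q) (r := .cons hxu p)
    (by simp [hq.2, ← hpu, ← hp]) hp.le
  exact (Walk.cons.inj this).2.eq

theorem pow_dist_apply_ne_zero [Fintype V] [DecidableEq V] [Semiring R] [NoZeroDivisors R]
    [Nontrivial R] (hA : ∀ i j, i ≠ j → (A i j ≠ 0 ↔ G.Adj i j)) {x y : V}
    (huniq : ∃! p : G.Walk x y, p.IsPath ∧ p.length = G.dist x y) :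
    (A ^ G.dist x y) x y ≠ 0 := by
  have hA' i j hij := (hA i j hij).mp
  obtain ⟨d, hd⟩ : ∃ d, G.dist x y = d := ⟨_, rfl⟩
  induction d generalizing x with
  | zero =>
    obtain ⟨p, -, hp⟩ := huniq.exists
    obtain rfl := Walk.eq_of_length_eq_zero (hp.trans hd)
    simp
  | succ d ih =>
    obtain ⟨w, -, hw⟩ := huniq.exists
    cases w with
    | nil => simp_all
    | @cons _ u _ hxu p =>
      have hdu : G.dist u y = d := by
        rw [← length_eq_dist_of_subwalk hw (p.isSubwalk_cons hxu)]
        simp_all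
      -- a nonzero term would give a walk `x → z ⇝ y` of length `≤ d + 1`, i.e. the geodesic
      have hother : ∀ z ≠ u, A x z * (A ^ d) z y = 0 := by
        intro z hzu
        by_contra hz
        by_cases hzx : x = z
        · subst hzx
          exact right_ne_zero_of_mul hz (pow_apply_eq_zero_of_lt_dist hA' (by omega))
        obtain ⟨w, hw⟩ :=
          exists_walk_length_le_of_pow_apply_ne_zero hA' (right_ne_zero_of_mul hz)
        have := Walk.eq_of_length_le_dist huniq
          (q := .cons (hA' x z hzx (left_ne_zero_of_mul hz)) w) (r := .cons hxu p)
          (by simp; omega) (by simp_all)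
        exact hzu (Walk.cons.inj this).1
      rw [hd, pow_succ', Matrix.mul_apply, Finset.sum_eq_single u (fun z _ => hother z) (by simp)]
      exact mul_ne_zero ((hA x u hxu.ne).mpr hxu)
        (hdu ▸ ih (existsUnique_path_of_cons huniq hw) hdu)

theorem adjMatrix_mem_sOfGraph [Fintype V] [DecidableEq V] (G : SimpleGraph V)
    [DecidableRel G.Adj] : G.adjMatrix ℝ ∈ SOfGraph G :=
  ⟨G.isSymm_adjMatrix, fun i j _ => by simp [adjMatrix_apply]⟩

end SimpleGraph

/-- If vertices `x, y` of a graph `G` are at distance `d`, and there is exactly one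
path of length `d` between `x` and `y`, then `q(G) ≥ d + 1`. -/
theorem stmt0 {V : Type*} [Fintype V] [DecidableEq V] (G : SimpleGraph V)
    (x y : V) (d : ℕ) (hdist : G.dist x y = d)
    (huniq : ∃! p : G.Walk x y, p.IsPath ∧ p.length = d) :
    d + 1 ≤ qGraph G := by
  classical
  subst hdist
  refine le_csInf ⟨_, G.adjMatrix ℝ, G.adjMatrix_mem_sOfGraph, rfl⟩ ?_
  rintro _ ⟨A, ⟨hsymm, hA⟩, rfl⟩
  exact (Matrix.isHermitian_iff_isSymm.mpr hsymm).lt_ncard_spectrum_of_pow_apply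
    (fun k hk => SimpleGraph.pow_apply_eq_zero_of_lt_dist (fun i j hij => (hA i j hij).mp) hk)
    (SimpleGraph.pow_dist_apply_ne_zero hA huniq)
end

section
/- Let G be a finite simple graph with q(G) = 2. If x, u, y are vertices with x adjacent to u and u adjacent to y and x ≠ y, then either x is adjacent to y, or there exists a vertex v ≠ u with x adjacent to v and v adjacent to y. -/
open Matrix

/-!
Pick `A ∈ S(G)` with exactly two eigenvalues `λ, μ`. Being symmetric, `A` is annihilated by
`(X - λ)(X - μ)`, so off the diagonal `A²` is a multiple of `A`. If `x, y` are distinct and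
non-adjacent, then `(A²)ₓᵧ = ∑ᵥ Aₓᵥ Aᵥᵧ = 0`; but the only nonzero terms of this sum come from
common neighbours `v` of `x` and `y`, so a unique common neighbour `u` would give
`(A²)ₓᵧ = Aₓᵤ Aᵤᵧ ≠ 0`.
-/

open Polynomial

theorem aeval_eq_zero_of_forall_mem_spectrum_isRoot {R A : Type*} {p : A → Prop}
    [CommSemiring R] [StarRing R] [MetricSpace R] [IsTopologicalSemiring R] [ContinuousStar R]
    [Ring A] [StarRing A] [TopologicalSpace A] [Algebra R A] [ContinuousFunctionalCalculus R A p]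
    (q : R[X]) {a : A} (ha : p a) (hq : ∀ x ∈ spectrum R a, q.IsRoot x) : aeval a q = 0 := by
  rw [← cfc_polynomial q a, cfc_congr (g := 0) hq, cfc_zero]

namespace Matrix.IsHermitian

variable {n : Type*} [Fintype n] [DecidableEq n] {A : Matrix n n ℝ}

theorem sub_smul_one_mul_sub_smul_one_eq_zero (hA : A.IsHermitian) {l m : ℝ}
    (hspec : spectrum ℝ A = {l, m}) : (A - l • 1) * (A - m • 1) = 0 := by
  have hroot : ∀ x ∈ spectrum ℝ A, ((X - C l) * (X - C m)).IsRoot x := by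
    intro x hx
    rw [hspec] at hx
    rcases hx with rfl | rfl <;> simp
  simpa [Algebra.algebraMap_eq_smul_one] using
    aeval_eq_zero_of_forall_mem_spectrum_isRoot _ hA.isSelfAdjoint hroot

theorem mul_self_apply_of_spectrum_eq_pair (hA : A.IsHermitian) {l m : ℝ}
    (hspec : spectrum ℝ A = {l, m}) {i j : n} (hij : i ≠ j) :
    (A * A) i j = (l + m) * A i j := by
  have h := congrFun (congrFun (hA.sub_smul_one_mul_sub_smul_one_eq_zero hspec) i) j
  simp only [sub_mul, mul_sub, Matrix.smul_mul, Matrix.mul_smul, Matrix.one_mul, Matrix.mul_one,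
    smul_smul, Matrix.sub_apply, Matrix.smul_apply, Matrix.one_apply_ne hij, smul_eq_mul,
    mul_zero, Matrix.zero_apply] at h
  linarith

end Matrix.IsHermitian

namespace SOfGraph

variable {V : Type*} [Fintype V] [DecidableEq V] {G : SimpleGraph V} {A : Matrix V V ℝ}

theorem exists_ncard_spectrum_eq_qGraph (hq : qGraph G ≠ 0) :
    ∃ A ∈ SOfGraph G, (spectrum ℝ A).ncard = qGraph G := by
  have hne : ((fun A => (spectrum ℝ A).ncard) '' SOfGraph G).Nonempty := by
    by_contra h
    rw [Set.not_nonempty_iff_eq_empty] at h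
    exact hq (by rw [qGraph, h, Nat.sInf_empty])
  exact Nat.sInf_mem hne

theorem isHermitian (hA : A ∈ SOfGraph G) : A.IsHermitian := by
  rw [Matrix.IsHermitian, Matrix.conjTranspose_eq_transpose_of_trivial]
  exact hA.1

theorem apply_ne_zero_of_adj (hA : A ∈ SOfGraph G) {i j : V} (h : G.Adj i j) : A i j ≠ 0 :=
  (hA.2 i j h.ne).mpr h

theorem apply_eq_zero_of_not_adj (hA : A ∈ SOfGraph G) {i j : V} (hij : i ≠ j)
    (h : ¬G.Adj i j) : A i j = 0 :=
  not_not.mp (mt (hA.2 i j hij).mp h)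

theorem adj_of_mul_apply_ne_zero (hA : A ∈ SOfGraph G) {x y v : V} (hxy : x ≠ y)
    (hnadj : ¬G.Adj x y) (h : A x v * A v y ≠ 0) : G.Adj x v ∧ G.Adj v y := by
  obtain ⟨hxv, hvy⟩ := mul_ne_zero_iff.mp h
  have hAxy := apply_eq_zero_of_not_adj hA hxy hnadj
  have hx_ne_v : x ≠ v := by rintro rfl; exact hvy hAxy
  have hv_ne_y : v ≠ y := by rintro rfl; exact hxv hAxy
  exact ⟨(hA.2 x v hx_ne_v).mp hxv, (hA.2 v y hv_ne_y).mp hvy⟩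

theorem mul_self_apply_of_unique_common_neighbor (hA : A ∈ SOfGraph G) {x u y : V}
    (hxy : x ≠ y) (hnadj : ¬G.Adj x y) (huniq : ∀ v ≠ u, G.Adj x v → ¬G.Adj v y) :
    (A * A) x y = A x u * A u y := by
  rw [Matrix.mul_apply]
  refine Finset.sum_eq_single u (fun v _ hvu => ?_) (fun hu => absurd (Finset.mem_univ u) hu)
  by_contra h
  obtain ⟨hxv, hvy⟩ := adj_of_mul_apply_ne_zero hA hxy hnadj h
  exact huniq v hvu hxv hvy

end SOfGraph

/-- If `q(G) = 2` and `x u y` is a path of length `2` with `x ≠ y`, then either `x`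
and `y` are adjacent, or there is another path `x v y` with `v ≠ u`. -/
theorem stmt1 {V : Type*} [Fintype V] [DecidableEq V] (G : SimpleGraph V)
    (hq : qGraph G = 2) (x u y : V) (hxu : G.Adj x u) (huy : G.Adj u y) (hxy : x ≠ y) :
    G.Adj x y ∨ ∃ v, v ≠ u ∧ G.Adj x v ∧ G.Adj v y := by
  by_contra! h
  obtain ⟨hnadj, huniq⟩ := h
  obtain ⟨A, hA, hcard⟩ := SOfGraph.exists_ncard_spectrum_eq_qGraph (G := G) (by omega)
  obtain ⟨l, m, -, hspec⟩ := Set.ncard_eq_two.mp (hcard.trans hq)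
  have hsq := (SOfGraph.isHermitian hA).mul_self_apply_of_spectrum_eq_pair hspec hxy
  rw [SOfGraph.apply_eq_zero_of_not_adj hA hxy hnadj, mul_zero,
    SOfGraph.mul_self_apply_of_unique_common_neighbor hA hxy hnadj huniq] at hsq
  exact mul_ne_zero (SOfGraph.apply_ne_zero_of_adj hA hxu)
    (SOfGraph.apply_ne_zero_of_adj hA huy) hsq
end

section
/- If G is a connected finite simple graph on at least 3 vertices with q(G) = 2, then G is 2-connected (i.e., G has no cut vertex: deleting any single vertex leaves a connected graph on at least 2 vertices). -/
open Matrix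

/-!
If `A ∈ S(G)` has exactly two eigenvalues `a, b`, then `A² = (a + b) A - a b I`, so off the
diagonal `A²` vanishes wherever `A` does. Suppose `v` were a cut vertex of the connected graph
`G`, and pick neighbours `i, j` of `v` in different components of `G - v`. Then `A i j = 0`,
while `(A²) i j = ∑ₖ A i k * A k j = A i v * A v j ≠ 0`: every other term vanishes, since
`A` has no nonzero entry between different components of `G - v`.
-/

theorem Matrix.IsHermitian.sub_smul_one_mul_sub_smul_one_eq_zero_s2 {n : Type*} [Fintype n]
    [DecidableEq n] {A : Matrix n n ℝ} (hA : A.IsHermitian) {a b : ℝ}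
    (hspec : spectrum ℝ A = {a, b}) : (A - a • 1) * (A - b • 1) = 0 := by
  have : IsSelfAdjoint A := hA
  calc (A - a • 1) * (A - b • 1) = cfc (fun x : ℝ => (x - a) * (x - b)) A := by
        rw [cfc_mul .., cfc_sub .., cfc_sub .., cfc_id' .., cfc_const .., cfc_const ..]
        simp [Algebra.algebraMap_eq_smul_one]
    _ = cfc (0 : ℝ → ℝ) A := cfc_congr fun x hx => by
        rw [hspec] at hx
        rcases hx with rfl | rfl <;> simp
    _ = 0 := cfc_zero ℝ A

theorem Matrix.IsHermitian.exists_mul_self_apply_eq_mul_of_ncard_spectrum_eq_two {n : Type*}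
    [Fintype n] [DecidableEq n] {A : Matrix n n ℝ} (hA : A.IsHermitian)
    (h2 : (spectrum ℝ A).ncard = 2) : ∃ c : ℝ, ∀ i j, i ≠ j → (A * A) i j = c * A i j := by
  obtain ⟨a, b, -, hspec⟩ := Set.ncard_eq_two.mp h2
  refine ⟨a + b, fun i j hij => ?_⟩
  have := congrFun₂ (hA.sub_smul_one_mul_sub_smul_one_eq_zero_s2 hspec) i j
  simp only [mul_sub, sub_mul, Algebra.smul_mul_assoc, one_mul, Algebra.mul_smul_comm, mul_one,
    sub_apply, smul_apply, smul_eq_mul, one_apply_ne hij, mul_zero, sub_zero, zero_apply] at this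
  linarith

namespace SimpleGraph

variable {V : Type*} {G : SimpleGraph V}

theorem Reachable.exists_adj_reachable_induce_ne {a v : V} (h : G.Reachable a v) (ha : a ≠ v) :
    ∃ i, ∃ hi : i ≠ v, G.Adj i v ∧ (G.induce {w | w ≠ v}).Reachable ⟨a, ha⟩ ⟨i, hi⟩ := by
  obtain ⟨p⟩ := h
  induction p with
  | nil => exact absurd rfl ha
  | @cons a c w hac _ ih =>
    by_cases hc : c = w
    · subst hc
      exact ⟨a, ha, hac, .rfl⟩
    · obtain ⟨i, hi, hiv, hci⟩ := ih hc
      exact ⟨i, hi, hiv, (Adj.reachable (by simpa using hac)).trans hci⟩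

variable [Fintype V] [DecidableEq V]

theorem adjMatrix_mem_SOfGraph [DecidableRel G.Adj] : G.adjMatrix ℝ ∈ SOfGraph G :=
  ⟨G.isSymm_adjMatrix, fun i j _ => by simp [adjMatrix_apply]⟩

theorem exists_mem_SOfGraph_ncard_spectrum_eq_qGraph (G : SimpleGraph V) :
    ∃ A ∈ SOfGraph G, (spectrum ℝ A).ncard = qGraph G := by
  classical
  exact Nat.sInf_mem (Set.Nonempty.image _ ⟨_, adjMatrix_mem_SOfGraph⟩)

theorem apply_eq_zero_of_mem_SOfGraph_of_not_reachable_induce {A : Matrix V V ℝ}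
    (hA : A ∈ SOfGraph G) {s : Set V} {x y : V} (hx : x ∈ s) (hy : y ∈ s)
    (h : ¬ (G.induce s).Reachable ⟨x, hx⟩ ⟨y, hy⟩) : A x y = 0 := by
  have hxy : x ≠ y := by
    rintro rfl
    exact h .rfl
  by_contra hA0
  exact h (Adj.reachable (by simpa using (hA.2 x y hxy).mp hA0))

theorem mul_self_apply_eq_of_not_reachable_induce_ne {A : Matrix V V ℝ} (hA : A ∈ SOfGraph G)
    {v i j : V} (hi : i ≠ v) (hj : j ≠ v)
    (hij : ¬ (G.induce {w | w ≠ v}).Reachable ⟨i, hi⟩ ⟨j, hj⟩) :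
    (A * A) i j = A i v * A v j := by
  refine Fintype.sum_eq_single v fun k hk => ?_
  change A i k * A k j = 0
  by_cases hik : (G.induce {w | w ≠ v}).Reachable ⟨i, hi⟩ ⟨k, hk⟩
  · rw [apply_eq_zero_of_mem_SOfGraph_of_not_reachable_induce hA hk hj (hij <| hik.trans ·),
      mul_zero]
  · rw [apply_eq_zero_of_mem_SOfGraph_of_not_reachable_induce hA hi hk hik, zero_mul]

theorem Connected.preconnected_induce_ne_of_mul_self_apply_eq_mul (hconn : G.Connected)
    {A : Matrix V V ℝ} (hA : A ∈ SOfGraph G) {c : ℝ}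
    (hc : ∀ i j, i ≠ j → (A * A) i j = c * A i j) (v : V) :
    (G.induce {w | w ≠ v}).Preconnected := by
  rintro ⟨x, hx⟩ ⟨y, hy⟩
  by_contra hxy
  obtain ⟨i, hi, hiv, hxi⟩ := (hconn x v).exists_adj_reachable_induce_ne hx
  obtain ⟨j, hj, hjv, hyj⟩ := (hconn y v).exists_adj_reachable_induce_ne hy
  have hij : ¬ (G.induce {w | w ≠ v}).Reachable ⟨i, hi⟩ ⟨j, hj⟩ :=
    fun hij => hxy (hxi.trans (hij.trans hyj.symm))
  have hne : i ≠ j := by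
    rintro rfl
    exact hij .rfl
  have hAij := apply_eq_zero_of_mem_SOfGraph_of_not_reachable_induce hA hi hj hij
  have hsq := hc i j hne
  rw [mul_self_apply_eq_of_not_reachable_induce_ne hA hi hj hij, hAij, mul_zero] at hsq
  exact mul_ne_zero ((hA.2 i v hi).mpr hiv) ((hA.2 v j (Ne.symm hj)).mpr hjv.symm) hsq

end SimpleGraph

/-- A connected graph on at least `3` vertices with `q(G) = 2` is `2`-connected:
deleting any single vertex leaves a connected graph on at least `2` vertices. -/
theorem stmt2 {V : Type*} [Fintype V] [DecidableEq V] (G : SimpleGraph V)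
    (hconn : G.Connected) (hn : 3 ≤ Fintype.card V) (hq : qGraph G = 2) :
    ∀ v : V, (G.induce {w : V | w ≠ v}).Connected ∧ 2 ≤ Fintype.card {w : V | w ≠ v} := by
  obtain ⟨A, hA, hspec⟩ := G.exists_mem_SOfGraph_ncard_spectrum_eq_qGraph
  have hherm : A.IsHermitian := hA.1
  obtain ⟨c, hc⟩ := hherm.exists_mul_self_apply_eq_mul_of_ncard_spectrum_eq_two (hspec.trans hq)
  intro v
  have hcard : 2 ≤ Fintype.card {w : V | w ≠ v} := by
    rw [Set.card_ne_eq]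
    omega
  refine ⟨(SimpleGraph.connected_iff _).mpr ⟨?_, Fintype.card_pos_iff.mp (by omega)⟩, hcard⟩
  exact hconn.preconnected_induce_ne_of_mul_self_apply_eq_mul hA hc v
end

section
/- For every k ≥ 2, the double-ended candle G_k satisfies q(G_k) = 2. -/
open Matrix

/-!
A matrix in `S(G)` with a single eigenvalue is scalar, hence diagonal, so `q(G) ≥ 2` as soon as
`G` has an edge. For the upper bound put weights `f, g` on the vertices of `G_k`, let `P` carry
`f u * g v` on every edge from a vertex `u` of level `s` to a vertex `v` of level `s + 1`, and take
`A = P + Pᵀ`. The weights are chosen so that `(f, g)` is `(1, 0)` at the bottom vertex and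
`(0, 1)` at the top vertex, and on every middle level `f` and `g` restrict to an orthonormal basis
of `ℝ²` with no zero coordinate. Orthogonality of `f` and `g` on each level gives `P² = 0`,
orthonormality gives `P Pᵀ + Pᵀ P = 1`, so `A² = 1` and `A` has no eigenvalues besides `±1`.
-/

theorem spectrum_subset_of_mul_self_eq_one {𝕜 A : Type*} [Field 𝕜] [Ring A] [Algebra 𝕜 A]
    [Nontrivial A] {a : A} (ha : a * a = 1) : spectrum 𝕜 a ⊆ {1, -1} := by
  intro x hx
  have hmap := spectrum.subset_polynomial_aeval a (Polynomial.X * Polynomial.X - 1) ⟨x, hx, rfl⟩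
  simpa only [Polynomial.eval_sub, Polynomial.eval_mul, Polynomial.eval_X, Polynomial.eval_one,
    map_sub, map_mul, Polynomial.aeval_X, map_one, ha, sub_self, spectrum.zero_eq,
    Set.mem_singleton_iff, sub_eq_zero, mul_self_eq_one_iff, Set.mem_insert_iff] using hmap

theorem Matrix.IsHermitian.two_le_ncard_spectrum {𝕜 n : Type*} [RCLike 𝕜] [Fintype n]
    [DecidableEq n] {A : Matrix n n 𝕜} (hA : A.IsHermitian) {i j : n} (hij : i ≠ j)
    (hAij : A i j ≠ 0) : 2 ≤ (spectrum ℝ A).ncard := by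
  rw [hA.spectrum_real_eq_range_eigenvalues]
  by_contra! hlt
  have hconst : ∀ m, hA.eigenvalues m = hA.eigenvalues i := fun m =>
    (Set.ncard_le_one (Set.finite_range _)).mp (by omega) _ ⟨m, rfl⟩ _ ⟨i, rfl⟩
  have hdiag : diagonal (RCLike.ofReal ∘ hA.eigenvalues) =
      algebraMap 𝕜 (Matrix n n 𝕜) (hA.eigenvalues i) := by
    ext a b
    simp [diagonal_apply, algebraMap_matrix_apply, hconst]
  have hscalar := hA.spectral_theorem
  rw [hdiag, AlgHomClass.commutes] at hscalar
  exact hAij (by rw [hscalar, algebraMap_matrix_apply, if_neg hij])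

section SOfGraph

variable {V : Type*} [Fintype V] [DecidableEq V] {G : SimpleGraph V}

theorem two_le_ncard_spectrum_of_mem_SOfGraph {i j : V} (hij : G.Adj i j) {A : Matrix V V ℝ}
    (hA : A ∈ SOfGraph G) : 2 ≤ (spectrum ℝ A).ncard :=
  (isHermitian_iff_isSymm.mpr hA.1).two_le_ncard_spectrum hij.ne ((hA.2 i j hij.ne).mpr hij)

theorem qGraph_eq_two_of_mul_self_eq_one {i j : V} (hij : G.Adj i j) {A : Matrix V V ℝ}
    (hA : A ∈ SOfGraph G) (hA2 : A * A = 1) : qGraph G = 2 := by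
  have : Nonempty V := ⟨i⟩
  have hle : (spectrum ℝ A).ncard ≤ 2 :=
    (Set.ncard_le_ncard (spectrum_subset_of_mul_self_eq_one hA2) (Set.toFinite _)).trans
      (Set.ncard_pair (by norm_num)).le
  have hlower : ∀ B ∈ SOfGraph G, 2 ≤ (spectrum ℝ B).ncard := fun B hB =>
    two_le_ncard_spectrum_of_mem_SOfGraph hij hB
  refine IsLeast.csInf_eq ⟨⟨A, hA, le_antisymm hle (hlower A hA)⟩, ?_⟩
  rintro _ ⟨B, hB, rfl⟩
  exact hlower B hB

end SOfGraph

section RisingMatrix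

variable {V R : Type*} [CommRing R] (ℓ : V → ℕ) (f g : V → R)

def risingMatrix : Matrix V V R :=
  of fun i j => if ℓ i + 1 = ℓ j then f i * g j else 0

variable {ℓ f g}

lemma risingMatrix_mul_self [Fintype V] (hX : ∀ s, ∑ m with ℓ m = s, f m * g m = 0) :
    risingMatrix ℓ f g * risingMatrix ℓ f g = 0 := by
  ext i j
  calc (risingMatrix ℓ f g * risingMatrix ℓ f g) i j
      = ∑ m with ℓ m = ℓ i + 1, (if ℓ i + 2 = ℓ j then f i * g j else 0) * (f m * g m) := by
        rw [mul_apply, Finset.sum_filter]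
        refine Finset.sum_congr rfl fun m _ => ?_
        simp only [risingMatrix, of_apply]
        split_ifs <;> first | omega | ring
    _ = 0 := by rw [← Finset.mul_sum, hX, mul_zero]

lemma risingMatrix_mul_transpose_apply [Fintype V] (i j : V) :
    (risingMatrix ℓ f g * (risingMatrix ℓ f g)ᵀ) i j =
      if ℓ i = ℓ j then f i * f j * ∑ m with ℓ m = ℓ i + 1, g m ^ 2 else 0 := by
  rw [mul_apply, Finset.sum_filter]
  split_ifs with h
  · rw [Finset.mul_sum]
    refine Finset.sum_congr rfl fun m _ => ?_
    simp only [risingMatrix, of_apply, transpose_apply]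
    split_ifs <;> first | omega | ring
  · refine Finset.sum_eq_zero fun m _ => ?_
    simp only [risingMatrix, of_apply, transpose_apply]
    split_ifs <;> first | omega | ring

lemma transpose_mul_risingMatrix_apply [Fintype V] (i j : V) :
    ((risingMatrix ℓ f g)ᵀ * risingMatrix ℓ f g) i j =
      if ℓ i = ℓ j then g i * g j * ∑ m with ℓ m + 1 = ℓ i, f m ^ 2 else 0 := by
  rw [mul_apply, Finset.sum_filter]
  split_ifs with h
  · rw [Finset.mul_sum]
    refine Finset.sum_congr rfl fun m _ => ?_
    simp only [risingMatrix, of_apply, transpose_apply]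
    split_ifs <;> first | omega | ring
  · refine Finset.sum_eq_zero fun m _ => ?_
    simp only [risingMatrix, of_apply, transpose_apply]
    split_ifs <;> first | omega | ring

lemma risingMatrix_mul_transpose_add_transpose_mul [Fintype V] [DecidableEq V]
    (hF : ∀ i, f i ≠ 0 → ∑ m with ℓ m = ℓ i + 1, g m ^ 2 = 1)
    (hG : ∀ i, g i ≠ 0 → ∑ m with ℓ m + 1 = ℓ i, f m ^ 2 = 1)
    (hfg : ∀ i j, ℓ i = ℓ j → f i * f j + g i * g j = if i = j then 1 else 0) :
    risingMatrix ℓ f g * (risingMatrix ℓ f g)ᵀ + (risingMatrix ℓ f g)ᵀ * risingMatrix ℓ f g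
      = 1 := by
  ext i j
  rw [Matrix.add_apply, risingMatrix_mul_transpose_apply, transpose_mul_risingMatrix_apply,
    one_apply]
  by_cases hij : ℓ i = ℓ j
  · have hf : f i * f j * ∑ m with ℓ m = ℓ i + 1, g m ^ 2 = f i * f j := by
      by_cases h0 : f i = 0
      · simp [h0]
      · rw [hF i h0, mul_one]
    have hg : g i * g j * ∑ m with ℓ m + 1 = ℓ i, f m ^ 2 = g i * g j := by
      by_cases h0 : g i = 0
      · simp [h0]
      · rw [hG i h0, mul_one]
    rw [if_pos hij, if_pos hij, hf, hg, hfg i j hij]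
  · rw [if_neg hij, if_neg hij, if_neg (ne_of_apply_ne ℓ hij), add_zero]

lemma risingMatrix_add_transpose_mul_self [Fintype V] [DecidableEq V]
    (hX : ∀ s, ∑ m with ℓ m = s, f m * g m = 0)
    (hF : ∀ i, f i ≠ 0 → ∑ m with ℓ m = ℓ i + 1, g m ^ 2 = 1)
    (hG : ∀ i, g i ≠ 0 → ∑ m with ℓ m + 1 = ℓ i, f m ^ 2 = 1)
    (hfg : ∀ i j, ℓ i = ℓ j → f i * f j + g i * g j = if i = j then 1 else 0) :
    (risingMatrix ℓ f g + (risingMatrix ℓ f g)ᵀ) * (risingMatrix ℓ f g + (risingMatrix ℓ f g)ᵀ)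
      = 1 := by
  set P := risingMatrix ℓ f g
  calc (P + Pᵀ) * (P + Pᵀ) = P * P + (P * Pᵀ + Pᵀ * P) + (P * P)ᵀ := by
        rw [transpose_mul]; noncomm_ring
    _ = 1 := by
      rw [risingMatrix_mul_self hX, risingMatrix_mul_transpose_add_transpose_mul hF hG hfg,
        transpose_zero, zero_add, add_zero]

lemma risingMatrix_add_transpose_apply_ne_zero_iff
    (hw : ∀ i j, ℓ i + 1 = ℓ j → f i * g j ≠ 0) (i j : V) :
    (risingMatrix ℓ f g + (risingMatrix ℓ f g)ᵀ) i j ≠ 0 ↔ ℓ i + 1 = ℓ j ∨ ℓ j + 1 = ℓ i := by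
  simp only [Matrix.add_apply, transpose_apply, risingMatrix, of_apply]
  by_cases h : ℓ i + 1 = ℓ j
  · rw [if_pos h, if_neg (by omega), add_zero]
    simpa [h] using hw i j h
  · by_cases h' : ℓ j + 1 = ℓ i
    · rw [if_neg h, if_pos h', zero_add]
      simpa [h'] using hw j i h'
    · simp [h, h']

end RisingMatrix

lemma risingMatrix_add_transpose_mem_SOfGraph {V : Type*} [Fintype V] [DecidableEq V]
    {ℓ : V → ℕ} {f g : V → ℝ}
    (hw : ∀ i j, ℓ i + 1 = ℓ j → f i * g j ≠ 0) :
    risingMatrix ℓ f g + (risingMatrix ℓ f g)ᵀ ∈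
      SOfGraph (SimpleGraph.fromRel fun i j => ℓ i + 1 = ℓ j) := by
  refine ⟨by rw [IsSymm, transpose_add, transpose_transpose, add_comm], fun i j hij => ?_⟩
  rw [risingMatrix_add_transpose_apply_ne_zero_iff hw, SimpleGraph.fromRel_adj]
  exact ⟨fun h => ⟨hij, h⟩, And.right⟩

namespace DoubleCandle

variable {k : ℕ}

def level (i : Fin (2 * k)) : ℕ := (i.val + 1) / 2

noncomputable def lowerWeight (i : Fin (2 * k)) : ℝ :=
  if i.val = 0 then 1 else if i.val = 2 * k - 1 then 0 else if i.val % 2 = 1 then √2⁻¹ else -√2⁻¹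

noncomputable def upperWeight (i : Fin (2 * k)) : ℝ :=
  if i.val = 0 then 0 else if i.val = 2 * k - 1 then 1 else √2⁻¹

lemma sqrt_inv_two_mul_self : √2⁻¹ * √2⁻¹ = (2⁻¹ : ℝ) := Real.mul_self_sqrt (by norm_num)

lemma sum_level_eq_add {s : ℕ} (h1 : 1 ≤ s) (h2 : s < k) (φ : Fin (2 * k) → ℝ) :
    ∑ m with level m = s, φ m = φ ⟨2 * s - 1, by omega⟩ + φ ⟨2 * s, by omega⟩ := by
  refine Finset.sum_eq_add_of_mem _ _ ?_ ?_ (by simp [Fin.ext_iff]; omega) fun m hm hne => ?_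
  all_goals rw [Finset.mem_filter_univ] at *; simp only [level, ne_eq, Fin.ext_iff] at *
  all_goals omega

lemma sum_level_zero (hk : 1 ≤ k) (φ : Fin (2 * k) → ℝ) :
    ∑ m with level m = 0, φ m = φ ⟨0, by omega⟩ := by
  refine Finset.sum_eq_single_of_mem _ ?_ fun m hm hne => ?_
  all_goals rw [Finset.mem_filter_univ] at *; simp only [level, ne_eq, Fin.ext_iff] at *
  all_goals omega

lemma sum_level_top (hk : 1 ≤ k) (φ : Fin (2 * k) → ℝ) :
    ∑ m with level m = k, φ m = φ ⟨2 * k - 1, by omega⟩ := by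
  refine Finset.sum_eq_single_of_mem _ ?_ fun m hm hne => ?_
  all_goals rw [Finset.mem_filter_univ] at *; simp only [level, ne_eq, Fin.ext_iff] at *
  all_goals omega

lemma lowerWeight_mul_upperWeight_ne_zero {i j : Fin (2 * k)} (h : level i + 1 = level j) :
    lowerWeight i * upperWeight j ≠ 0 := by
  have := j.isLt
  simp only [level] at h
  simp only [lowerWeight, upperWeight]
  split_ifs <;> first | omega | simp

lemma lowerWeight_mul_add_upperWeight_mul {i j : Fin (2 * k)} (h : level i = level j) :
    lowerWeight i * lowerWeight j + upperWeight i * upperWeight j = if i = j then 1 else 0 := by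
  simp only [level] at h
  simp only [lowerWeight, upperWeight, Fin.ext_iff]
  split_ifs <;> first | omega | ring1 | linear_combination 2 * sqrt_inv_two_mul_self

lemma sum_level_lowerWeight_mul_upperWeight (s : ℕ) :
    ∑ m : Fin (2 * k) with level m = s, lowerWeight m * upperWeight m = 0 := by
  by_cases hs : 1 ≤ s ∧ s < k
  · rw [sum_level_eq_add hs.1 hs.2]
    simp only [lowerWeight, upperWeight]
    split_ifs <;> first | omega | ring1
  · refine Finset.sum_eq_zero fun m hm => ?_
    rw [Finset.mem_filter_univ] at hm
    have := m.isLt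
    simp only [level] at hm
    simp only [lowerWeight, upperWeight]
    split_ifs <;> first | omega | ring1

lemma sum_level_succ_upperWeight_sq {i : Fin (2 * k)} (hi : lowerWeight i ≠ 0) :
    ∑ m : Fin (2 * k) with level m = level i + 1, upperWeight m ^ 2 = 1 := by
  have hlt : level i < k := by
    have := i.isLt
    simp only [lowerWeight] at hi
    simp only [level]
    split_ifs at hi <;> first | omega | exact absurd rfl hi
  rcases (show level i + 1 < k ∨ level i + 1 = k by omega) with hmid | htop
  · rw [sum_level_eq_add (by omega) hmid]
    simp only [upperWeight]
    split_ifs <;> first | omega | contradiction | linear_combination 2 * sqrt_inv_two_mul_self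
  · rw [htop, sum_level_top (by omega)]
    simp only [upperWeight]
    split_ifs <;> first | omega | norm_num

lemma sum_level_pred_lowerWeight_sq {i : Fin (2 * k)} (hi : upperWeight i ≠ 0) :
    ∑ m : Fin (2 * k) with level m + 1 = level i, lowerWeight m ^ 2 = 1 := by
  obtain ⟨s, hs⟩ : ∃ s, level i = s + 1 := by
    simp only [upperWeight] at hi
    simp only [level]
    split_ifs at hi <;> first | exact absurd rfl hi | exact ⟨(i.val + 1) / 2 - 1, by omega⟩
  have hsk : s < k := by have := i.isLt; simp only [level] at hs; omega
  simp only [hs, Nat.add_right_cancel_iff]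
  rcases (show s = 0 ∨ 1 ≤ s by omega) with hroot | hmid
  · rw [hroot, sum_level_zero (by omega)]
    simp only [lowerWeight]
    split_ifs <;> first | omega | norm_num
  · rw [sum_level_eq_add hmid hsk]
    simp only [lowerWeight]
    split_ifs <;> first | omega | contradiction | linear_combination 2 * sqrt_inv_two_mul_self

end DoubleCandle

/-- For every `k ≥ 2`, the double-ended candle `G_k` satisfies `q(G_k) = 2`. -/
theorem stmt6 (k : ℕ) (hk : 2 ≤ k) : qGraph (doubleCandle k) = 2 := by
  have hadj : (doubleCandle k).Adj ⟨0, by omega⟩ ⟨1, by omega⟩ := by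
    simp [doubleCandle]
  exact qGraph_eq_two_of_mul_self_eq_one hadj
    (risingMatrix_add_transpose_mem_SOfGraph fun _ _ =>
      DoubleCandle.lowerWeight_mul_upperWeight_ne_zero)
    (risingMatrix_add_transpose_mul_self DoubleCandle.sum_level_lowerWeight_mul_upperWeight
      (fun _ => DoubleCandle.sum_level_succ_upperWeight_sq)
      (fun _ => DoubleCandle.sum_level_pred_lowerWeight_sq)
      (fun _ _ => DoubleCandle.lowerWeight_mul_add_upperWeight_mul))
end

section
/- Let G be a connected finite simple graph on n ≥ 3 vertices with q(G) = 2, let v be a vertex of G, and let u be a vertex with graph distance d(v, u) = i ≥ 2. Then u has at least two neighbors at distance i − 1 from v. -/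
/-!
A matrix `A ∈ S(G)` with exactly two eigenvalues `l, m` satisfies `(A - l)(A - m) = 0`, so `A²`
is a combination of `A` and `1` and vanishes wherever `A` does off the diagonal. For `x, y` at
distance 2 the entry `(A²) x y = ∑ z, A x z * A z y` has a nonzero term exactly at the common
neighbours of `x` and `y`, so there cannot be just one of them. Take `x` at distance `i - 2` from
`v` on a geodesic from `v` to `u`: the common neighbours of `x` and `u` lie at distance `i - 1`.
-/

open Matrix

theorem IsSelfAdjoint.sub_algebraMap_mul_sub_algebraMap_eq_zero {A : Type*} [Ring A]
    [StarRing A] [TopologicalSpace A] [Algebra ℝ A]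
    [ContinuousFunctionalCalculus ℝ A IsSelfAdjoint] {a : A} (ha : IsSelfAdjoint a) {l m : ℝ}
    (hspec : spectrum ℝ a ⊆ {l, m}) :
    (a - algebraMap ℝ A l) * (a - algebraMap ℝ A m) = 0 :=
  calc (a - algebraMap ℝ A l) * (a - algebraMap ℝ A m)
      = cfc (fun x => (x - l) * (x - m)) a := by
        rw [cfc_mul _ _ a, cfc_sub _ _ a, cfc_sub _ _ a, cfc_id' ℝ a, cfc_const l a,
          cfc_const m a]
    _ = cfc (0 : ℝ → ℝ) a := cfc_congr fun x hx => by rcases hspec hx with rfl | rfl <;> simp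
    _ = 0 := cfc_zero ℝ a

namespace Matrix

variable {n R : Type*} [Fintype n] [DecidableEq n] [CommRing R]

theorem mul_self_apply_eq_zero_of_sub_algebraMap_mul_eq_zero {A : Matrix n n R} {l m : R}
    (h : (A - algebraMap R _ l) * (A - algebraMap R _ m) = 0) {x y : n} (hxy : x ≠ y)
    (hAxy : A x y = 0) : (A * A) x y = 0 := by
  have hentry := congrFun (congrFun h x) y
  simp only [sub_mul, mul_sub, Algebra.algebraMap_eq_smul_one, smul_mul_assoc, mul_smul_comm,
    one_mul, mul_one, sub_apply, smul_apply, one_apply_ne hxy, hAxy, smul_eq_mul, mul_zero,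
    zero_apply, sub_zero] at hentry
  exact hentry

end Matrix

namespace SimpleGraph

variable {V : Type*} {G : SimpleGraph V}

theorem Reachable.exists_dist_eq_and_dist_eq {v u : V} (hr : G.Reachable v u) {k : ℕ}
    (hk : k ≤ G.dist v u) : ∃ x, G.dist v x = k ∧ G.dist x u = G.dist v u - k := by
  obtain ⟨p, hp⟩ := hr.exists_walk_length_eq_dist
  refine ⟨p.getVert k, ?_, ?_⟩
  · rw [← length_eq_dist_of_subwalk hp (p.isSubwalk_take k), Walk.take_length]
    omega
  · rw [← length_eq_dist_of_subwalk hp (p.isSubwalk_drop k), Walk.drop_length, hp]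

theorem two_le_ncard_adj_dist_eq_sub_one [Finite V]
    (hcommon : ∀ x y, G.dist x y = 2 → 2 ≤ (G.commonNeighbors x y).ncard) {v u : V} {i : ℕ}
    (hi : 2 ≤ i) (hdist : G.dist v u = i) :
    2 ≤ {w | G.Adj u w ∧ G.dist v w = i - 1}.ncard := by
  have hr : G.Reachable v u := Reachable.of_dist_ne_zero (by omega)
  obtain ⟨x, hvx, hxu⟩ := hr.exists_dist_eq_and_dist_eq (k := i - 2) (by omega)
  refine (hcommon x u (by omega)).trans (Set.ncard_le_ncard ?_ (Set.toFinite _))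
  rintro w ⟨hxw, hwu⟩
  have h₁ := hxw.reachable.dist_triangle_right v
  have h₂ := hwu.symm.reachable.dist_triangle_right v
  rw [dist_eq_one_iff_adj.mpr hxw] at h₁
  rw [dist_eq_one_iff_adj.mpr hwu.symm] at h₂
  exact ⟨hwu, by omega⟩

end SimpleGraph

section SOfGraph

open SimpleGraph

variable {V : Type*} [Fintype V] [DecidableEq V] {G : SimpleGraph V}

theorem SimpleGraph.adjMatrix_mem_SOfGraph_s8 [DecidableRel G.Adj] :
    G.adjMatrix ℝ ∈ SOfGraph G :=
  ⟨G.isSymm_adjMatrix, fun i j _ => by simp [adjMatrix_apply]⟩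

theorem exists_mem_SOfGraph_ncard_spectrum_eq_qGraph (G : SimpleGraph V) :
    ∃ A ∈ SOfGraph G, (spectrum ℝ A).ncard = qGraph G := by
  classical
  exact Nat.sInf_mem ⟨_, Set.mem_image_of_mem _ G.adjMatrix_mem_SOfGraph_s8⟩

theorem mem_commonNeighbors_of_mem_SOfGraph {A : Matrix V V ℝ} (hA : A ∈ SOfGraph G)
    {x y z : V} (hAxy : A x y = 0) (hz : A x z * A z y ≠ 0) : z ∈ G.commonNeighbors x y := by
  obtain ⟨hxz, hzy⟩ := mul_ne_zero_iff.mp hz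
  have hzx : z ≠ x := by rintro rfl; exact hzy hAxy
  have hzy' : z ≠ y := by rintro rfl; exact hxz hAxy
  exact ⟨(hA.2 x z hzx.symm).mp hxz, ((hA.2 z y hzy').mp hzy).symm⟩

theorem two_le_ncard_commonNeighbors_of_mem_SOfGraph {A : Matrix V V ℝ} (hA : A ∈ SOfGraph G)
    (hA2 : (spectrum ℝ A).ncard = 2) {x y : V} (hxy : G.dist x y = 2) :
    2 ≤ (G.commonNeighbors x y).ncard := by
  obtain ⟨l, m, -, hspec⟩ := Set.ncard_eq_two.mp hA2
  have hquad := (Matrix.isHermitian_iff_isSymm.mpr hA.1).isSelfAdjoint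
    |>.sub_algebraMap_mul_sub_algebraMap_eq_zero hspec.subset
  have hne : x ≠ y := by rintro rfl; simp at hxy
  have hAxy : A x y = 0 := by
    by_contra h
    have := (hA.2 x y hne).mp h
    simp [dist_eq_one_iff_adj.mpr this] at hxy
  have hr : G.Reachable x y := Reachable.of_dist_ne_zero (by omega)
  obtain ⟨z₀, hxz₀, hz₀y⟩ := hr.exists_dist_eq_and_dist_eq (k := 1) (by omega)
  have hz₀ : z₀ ∈ G.commonNeighbors x y :=
    ⟨dist_eq_one_iff_adj.mp hxz₀, (dist_eq_one_iff_adj.mp (by omega)).symm⟩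
  by_contra! hlt
  have honly : ∀ z ∈ G.commonNeighbors x y, z = z₀ := fun z hz =>
    (Set.ncard_le_one_iff).mp (by omega) hz hz₀
  have hsq : (A * A) x y = A x z₀ * A z₀ y :=
    Finset.sum_eq_single z₀ (fun z _ hz => not_not.mp fun h =>
      hz (honly z (mem_commonNeighbors_of_mem_SOfGraph hA hAxy h))) (by simp)
  rw [Matrix.mul_self_apply_eq_zero_of_sub_algebraMap_mul_eq_zero hquad hne hAxy] at hsq
  exact mul_ne_zero ((hA.2 x z₀ hz₀.1.ne).mpr hz₀.1) ((hA.2 z₀ y hz₀.2.ne').mpr hz₀.2.symm)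
    hsq.symm

end SOfGraph

theorem stmt8_general {V : Type*} [Fintype V] [DecidableEq V] (G : SimpleGraph V)
    (hq : qGraph G = 2)
    (v u : V) (i : ℕ) (hi : 2 ≤ i) (hdist : G.dist v u = i) :
    2 ≤ {w : V | G.Adj u w ∧ G.dist v w = i - 1}.ncard := by
  obtain ⟨A, hA, hA2⟩ := exists_mem_SOfGraph_ncard_spectrum_eq_qGraph G
  exact SimpleGraph.two_le_ncard_adj_dist_eq_sub_one
    (fun x y => two_le_ncard_commonNeighbors_of_mem_SOfGraph hA (hA2.trans hq)) hi hdist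

/-- In a connected graph on `n ≥ 3` vertices with `q(G) = 2`, every vertex `u` at
distance `i ≥ 2` from a vertex `v` has at least two neighbors at distance `i - 1`
from `v`. -/
theorem stmt8 {V : Type*} [Fintype V] [DecidableEq V] (G : SimpleGraph V)
    (hconn : G.Connected) (hn : 3 ≤ Fintype.card V) (hq : qGraph G = 2)
    (v u : V) (i : ℕ) (hi : 2 ≤ i) (hdist : G.dist v u = i) :
    2 ≤ {w : V | G.Adj u w ∧ G.dist v w = i - 1}.ncard :=
  stmt8_general G hq v u i hi hdist
end

section
/- Let G be a connected finite simple graph on n ≥ 3 vertices with q(G) = 2, and let v be a vertex of degree 2 such that every vertex in N_i(v) for 2 ≤ i ≤ ε(v) has exactly two predecessors and every set N_i(v) is an independent set. Suppose H is an induced subgraph of G isomorphic to a double-ended candle via an isomorphism under which one end of the candle corresponds to v and the other end corresponds to a vertex u ∈ N_j(v) that has no successors. Then H = G (that is, H contains every vertex of G). -/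
open Matrix

/-!
If `A ∈ S(G)` has exactly two eigenvalues `a, b`, then `(A - a)(A - b) = 0`, so `(A²)ₓᵧ = 0`
whenever `x ≠ y` are non-adjacent. Consequently two non-adjacent vertices never have exactly one
common neighbour, and three pairwise non-adjacent vertices never have the same two common
neighbours `c, d`.

Layer `G` by the distance from `v`. If a level is a pair `{c, d}` whose members have a common
neighbour one level lower, the second fact gives any two vertices of the next level a common
successor. Three vertices `x, a, b` there would thus produce, one level up, vertices with
predecessor pairs `{a, b}, {x, b}, {x, a}`; by the first fact such a triangle of predecessor pairs
reproduces itself one level higher forever, which is impossible in a finite graph. So, inductively,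
the levels `1, …, m - 1` are exactly the levels of the candle, level `m` is `{u}` (two vertices
there would have a common successor), and nothing lies beyond `u`.
-/

theorem IsSelfAdjoint.sub_mul_sub_eq_zero_of_spectrum_subset {A : Type*} [Ring A] [StarRing A]
    [Algebra ℝ A] [TopologicalSpace A] [ContinuousFunctionalCalculus ℝ A IsSelfAdjoint] {x : A}
    (hx : IsSelfAdjoint x) {a b : ℝ} (h : spectrum ℝ x ⊆ {a, b}) :
    (x - algebraMap ℝ A a) * (x - algebraMap ℝ A b) = 0 := by
  have hpoly : cfc (fun t : ℝ => (t - a) * (t - b)) x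
      = (x - algebraMap ℝ A a) * (x - algebraMap ℝ A b) := by
    rw [cfc_mul (fun t : ℝ => t - a) (fun t : ℝ => t - b) x, cfc_sub (fun t : ℝ => t) (fun _ => a),
      cfc_sub (fun t : ℝ => t) (fun _ => b), cfc_id' ℝ x, cfc_const a x, cfc_const b x]
  rw [← hpoly, ← cfc_zero ℝ x]
  refine cfc_congr fun t ht => ?_
  rcases h ht with rfl | rfl <;> simp

theorem not_three_pairwise_orthogonal_in_plane {a b a' b' α β : ℝ} (hb : b ≠ 0) (hb' : b' ≠ 0)
    (hα : α ≠ 0) (h₁ : a * α + b * β = 0) (h₂ : a' * α + b' * β = 0)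
    (h₃ : a * a' + b * b' = 0) : False := by
  have : b * b' * (α ^ 2 + β ^ 2) = 0 := by
    linear_combination α ^ 2 * h₃ - a' * α * h₁ + b * β * h₂
  have : α ^ 2 + β ^ 2 = 0 := by simpa [hb, hb'] using this
  exact hα (by nlinarith)

section

variable {V : Type*} [Fintype V] [DecidableEq V] {G : SimpleGraph V}

theorem SOfGraph_nonempty (G : SimpleGraph V) : (SOfGraph G).Nonempty := by
  classical
  refine ⟨G.adjMatrix ℝ, G.isSymm_adjMatrix, fun i j _ => ?_⟩
  by_cases h : G.Adj i j <;> simp [h]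

theorem exists_mem_SOfGraph_mul_self_apply_eq_zero (hq : qGraph G = 2) :
    ∃ A ∈ SOfGraph G, ∀ x y, x ≠ y → ¬ G.Adj x y → (A * A) x y = 0 := by
  obtain ⟨A, hA, hcard⟩ := Nat.sInf_mem ((SOfGraph_nonempty G).image _)
  obtain ⟨a, b, -, hspec⟩ := Set.ncard_eq_two.mp (hcard.trans hq)
  have hquad := (isHermitian_iff_isSymm.mpr hA.1).isSelfAdjoint
    |>.sub_mul_sub_eq_zero_of_spectrum_subset hspec.subset
  refine ⟨A, hA, fun x y hxy hnadj => ?_⟩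
  have hAxy : A x y = 0 := not_not.mp fun h => hnadj ((hA.2 x y hxy).mp h)
  simpa [Matrix.sub_mul, Matrix.mul_sub, Algebra.algebraMap_eq_smul_one, hAxy, hxy] using
    congrFun (congrFun hquad x) y

theorem SOfGraph.mul_self_apply_eq_sum {A : Matrix V V ℝ} (hA : A ∈ SOfGraph G) {x y : V}
    (hxy : x ≠ y) (hnadj : ¬ G.Adj x y) {s : Finset V} (hs : G.commonNeighbors x y ⊆ s) :
    (A * A) x y = ∑ w ∈ s, A x w * A w y := by
  rw [Matrix.mul_apply]
  refine (Finset.sum_subset (Finset.subset_univ s) fun w _ hws => ?_).symm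
  have hAxy : A x y = 0 := not_not.mp fun h => hnadj ((hA.2 x y hxy).mp h)
  by_cases hwx : w = x
  · simp [hwx, hAxy]
  by_cases hwy : w = y
  · simp [hwy, hAxy]
  by_contra hne
  obtain ⟨hxw, hwy'⟩ := mul_ne_zero_iff.mp hne
  exact hws (hs ⟨(hA.2 x w (Ne.symm hwx)).mp hxw, ((hA.2 w y hwy).mp hwy').symm⟩)

theorem commonNeighbors_ne_singleton (hq : qGraph G = 2) {x y : V} (hxy : x ≠ y)
    (hnadj : ¬ G.Adj x y) (p : V) : G.commonNeighbors x y ≠ {p} := by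
  intro hp
  obtain ⟨A, hA, hsq⟩ := exists_mem_SOfGraph_mul_self_apply_eq_zero hq
  obtain ⟨hxp, hyp⟩ : p ∈ G.commonNeighbors x y := hp ▸ rfl
  have := hsq x y hxy hnadj
  rw [SOfGraph.mul_self_apply_eq_sum hA hxy hnadj (s := {p}) (by simp [hp]),
    Finset.sum_singleton] at this
  exact mul_ne_zero ((hA.2 x p hxp.ne).mpr hxp) ((hA.2 p y hyp.ne.symm).mpr hyp.symm) this

theorem false_of_three_commonNeighbors_eq_pair (hq : qGraph G = 2) {x y z c d : V}
    (hxy : x ≠ y) (hxz : x ≠ z) (hyz : y ≠ z)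
    (hnxy : ¬ G.Adj x y) (hnxz : ¬ G.Adj x z) (hnyz : ¬ G.Adj y z) (hcd : c ≠ d)
    (hcxy : G.commonNeighbors x y = {c, d}) (hcxz : G.commonNeighbors x z = {c, d})
    (hcyz : G.commonNeighbors y z = {c, d}) : False := by
  obtain ⟨A, hA, hsq⟩ := exists_mem_SOfGraph_mul_self_apply_eq_zero hq
  have hsum : ∀ {a b}, a ≠ b → ¬ G.Adj a b → G.commonNeighbors a b = {c, d} →
      A a c * A b c + A a d * A b d = 0 := fun {a b} hab hnab hcab => by
    have := hsq a b hab hnab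
    rwa [SOfGraph.mul_self_apply_eq_sum hA hab hnab (s := {c, d}) (by simp [hcab]),
      Finset.sum_pair hcd, hA.1.apply b c, hA.1.apply b d] at this
  have hentry : ∀ {a b}, G.Adj a b → A a b ≠ 0 := fun h => (hA.2 _ _ h.ne).mpr h
  have hmem : ∀ {a b}, G.commonNeighbors a b = {c, d} → ∀ e ∈ ({c, d} : Set V),
      G.Adj a e ∧ G.Adj b e := fun h e he => G.mem_commonNeighbors.mp (h.symm ▸ he)
  -- The rows of `x`, `y`, `z` restricted to the columns `c, d` would be three pairwise
  -- orthogonal nonzero vectors of `ℝ²`.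
  exact not_three_pairwise_orthogonal_in_plane (hentry (hmem hcxy d (by simp)).1)
    (hentry (hmem hcyz d (by simp)).1) (hentry (hmem hcxz c (by simp)).2)
    (hsum hxz hnxz hcxz) (hsum hyz hnyz hcyz) (hsum hxy hnxy hcxy)

end

def predecessors {V : Type*} (G : SimpleGraph V) (v z : V) : Set V :=
  {w | G.Adj z w ∧ G.dist v w + 1 = G.dist v z}

def IndependentLevels {V : Type*} (G : SimpleGraph V) (v : V) : Prop :=
  ∀ w₁ w₂, G.dist v w₁ = G.dist v w₂ → ¬ G.Adj w₁ w₂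

def TwoPredecessors {V : Type*} (G : SimpleGraph V) (v : V) : Prop :=
  ∀ z, 2 ≤ G.dist v z → (predecessors G v z).ncard = 2

section

variable {V : Type*} {G : SimpleGraph V} {v : V}

theorem dist_le_dist_add_one_of_adj {x y : V} (h : G.Adj x y) : G.dist v y ≤ G.dist v x + 1 := by
  rcases h.diff_dist_adj (u := v) with h | h | h <;> omega

theorem predecessors_nonempty (hconn : G.Connected) {z : V} (hz : G.dist v z ≠ 0) :
    (predecessors G v z).Nonempty := by
  obtain ⟨p, hp⟩ := hconn.exists_walk_length_eq_dist z v
  cases p with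
  | nil => exact absurd (SimpleGraph.dist_self (G := G) (v := v)) hz
  | @cons _ w _ h q =>
    refine ⟨w, h, ?_⟩
    have hq : G.dist v w ≤ q.length := G.dist_comm ▸ SimpleGraph.dist_le q
    have := dist_le_dist_add_one_of_adj (v := v) h.symm
    rw [SimpleGraph.Walk.length_cons, G.dist_comm] at hp
    omega

theorem dist_lt_of_forall_dist_ne (hconn : G.Connected) {k : ℕ} (hk : ∀ x, G.dist v x ≠ k)
    (x : V) : G.dist v x < k := by
  suffices ∀ n x, G.dist v x ≠ k + n by
    by_contra! h
    exact this (G.dist v x - k) x (by omega)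
  intro n
  induction n with
  | zero => exact hk
  | succ n ih =>
    intro x hx
    obtain ⟨w, -, hw⟩ := predecessors_nonempty hconn (v := v) (z := x) (by omega)
    exact ih w (by omega)

theorem IndependentLevels.dist_eq_add_one_or (hind : IndependentLevels G v) {x y : V}
    (h : G.Adj x y) : G.dist v y = G.dist v x + 1 ∨ G.dist v x = G.dist v y + 1 := by
  have : G.dist v x ≠ G.dist v y := fun he => hind x y he h
  rcases h.diff_dist_adj (u := v) with h' | h' | h' <;> omega

theorem commonNeighbors_eq_inter_predecessors (hind : IndependentLevels G v) {x y : V}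
    (hxy : G.dist v x = G.dist v y)
    (hno : ¬ ∃ t, G.Adj x t ∧ G.Adj y t ∧ G.dist v t = G.dist v x + 1) :
    G.commonNeighbors x y = predecessors G v x ∩ predecessors G v y := by
  ext t
  refine ⟨fun ⟨hxt, hyt⟩ => ?_, fun ⟨⟨hxt, _⟩, hyt, _⟩ => ⟨hxt, hyt⟩⟩
  have := hind.dist_eq_add_one_or hxt
  have := hind.dist_eq_add_one_or hyt
  have : G.dist v t ≠ G.dist v x + 1 := fun h => hno ⟨t, hxt, hyt, h⟩
  exact ⟨⟨hxt, by omega⟩, hyt, by omega⟩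

theorem commonNeighbors_eq_predecessors_inter_neighborSet (hind : IndependentLevels G v)
    {z w : V} (h : G.dist v w + 2 = G.dist v z) :
    G.commonNeighbors z w = predecessors G v z ∩ G.neighborSet w := by
  ext t
  refine ⟨fun ⟨hzt, hwt⟩ => ?_, fun ⟨⟨hzt, _⟩, hwt⟩ => ⟨hzt, hwt⟩⟩
  have := hind.dist_eq_add_one_or hzt
  have := hind.dist_eq_add_one_or hwt
  exact ⟨⟨hzt, by omega⟩, hwt⟩

theorem TwoPredecessors.predecessors_eq_pair (hpred : TwoPredecessors G v) {t a b : V}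
    (ht : 2 ≤ G.dist v t) (hab : a ≠ b) (ha : a ∈ predecessors G v t)
    (hb : b ∈ predecessors G v t) : predecessors G v t = {a, b} :=
  (Set.eq_of_subset_of_ncard_le (Set.pair_subset ha hb) (by rw [hpred t ht, Set.ncard_pair hab])
    (Set.finite_of_ncard_ne_zero (by rw [hpred t ht]; norm_num))).symm

theorem TwoPredecessors.predecessors_eq_of_level_eq_pair (hpred : TwoPredecessors G v)
    {k : ℕ} {c d z : V} (hk : 1 ≤ k) (hcd : c ≠ d) (hN : {y | G.dist v y = k} = {c, d})
    (hz : G.dist v z = k + 1) : predecessors G v z = {c, d} :=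
  Set.eq_of_subset_of_ncard_le (fun y hy => hN ▸ (show G.dist v y = k by have := hy.2; omega))
    (by rw [Set.ncard_pair hcd, hpred z (by omega)])

theorem dist_le_graphEccent [Fintype V] (z : V) : G.dist v z ≤ graphEccent G v :=
  Finset.le_sup (f := fun w => G.dist v w) (Finset.mem_univ z)

theorem twoPredecessors_of_ncard_eq_two [Fintype V]
    (hpred : ∀ i : ℕ, 2 ≤ i → i ≤ graphEccent G v → ∀ u : V, G.dist v u = i →
      {w : V | G.Adj u w ∧ G.dist v w = i - 1}.ncard = 2) : TwoPredecessors G v := by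
  intro z hz
  rw [← hpred _ hz (dist_le_graphEccent z) z rfl]
  congr 1
  ext w
  exact and_congr_right fun _ => by omega

end

section

variable {V : Type*} [Fintype V] [DecidableEq V] {G : SimpleGraph V} {v : V}

theorem exists_common_succ_of_predecessors_eq (hq : qGraph G = 2) (hind : IndependentLevels G v)
    {z z' w c d : V} (hzz' : z ≠ z') (hcd : c ≠ d) (hlev : G.dist v z = G.dist v z')
    (hw : G.dist v w + 2 = G.dist v z) (hz : predecessors G v z = {c, d})
    (hz' : predecessors G v z' = {c, d}) (hwc : G.Adj w c) (hwd : G.Adj w d) :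
    ∃ t, G.Adj z t ∧ G.Adj z' t ∧ G.dist v t = G.dist v z + 1 := by
  by_contra hno
  have hcdw : ({c, d} : Set V) ∩ G.neighborSet w = {c, d} :=
    Set.inter_eq_left.mpr (Set.pair_subset hwc hwd)
  have hfar : ∀ {y}, G.dist v y = G.dist v z → y ≠ w ∧ ¬ G.Adj y w := fun hy =>
    ⟨by rintro rfl; omega, fun h => by have := hind.dist_eq_add_one_or h; omega⟩
  refine false_of_three_commonNeighbors_eq_pair hq hzz' (hfar rfl).1 (hfar hlev.symm).1
    (hind z z' hlev) (hfar rfl).2 (hfar hlev.symm).2 hcd ?_ ?_ ?_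
  · rw [commonNeighbors_eq_inter_predecessors hind hlev hno, hz, hz', Set.inter_self]
  · rw [commonNeighbors_eq_predecessors_inter_neighborSet hind hw, hz, hcdw]
  · rw [commonNeighbors_eq_predecessors_inter_neighborSet hind (by omega), hz', hcdw]

theorem exists_predecessors_eq_pair_of_inter_eq_singleton (hq : qGraph G = 2)
    (hind : IndependentLevels G v) (hpred : TwoPredecessors G v) {a b p : V} (hab : a ≠ b)
    (hlev : G.dist v a = G.dist v b) (hp : predecessors G v a ∩ predecessors G v b = {p}) :
    ∃ t, predecessors G v t = {a, b} ∧ G.dist v t = G.dist v a + 1 := by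
  have hpa : p ∈ predecessors G v a := (hp.symm ▸ Set.mem_singleton p).1
  by_cases hsucc : ∃ t, G.Adj a t ∧ G.Adj b t ∧ G.dist v t = G.dist v a + 1
  · obtain ⟨t, hat, hbt, ht⟩ := hsucc
    exact ⟨t, hpred.predecessors_eq_pair (by have := hpa.2; omega) hab ⟨hat.symm, by omega⟩
      ⟨hbt.symm, by omega⟩, ht⟩
  · exact absurd ((commonNeighbors_eq_inter_predecessors hind hlev hsucc).trans hp)
      (commonNeighbors_ne_singleton hq hab (hind a b hlev) p)

structure IsPredTriangle (G : SimpleGraph V) (v z₁ z₂ z₃ p₁ p₂ p₃ : V) : Prop where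
  ne₁₂ : p₁ ≠ p₂
  ne₁₃ : p₁ ≠ p₃
  ne₂₃ : p₂ ≠ p₃
  pred₁ : predecessors G v z₁ = {p₂, p₃}
  pred₂ : predecessors G v z₂ = {p₁, p₃}
  pred₃ : predecessors G v z₃ = {p₁, p₂}

theorem IsPredTriangle.exists_succ (hq : qGraph G = 2) (hind : IndependentLevels G v)
    (hpred : TwoPredecessors G v) {z₁ z₂ z₃ p₁ p₂ p₃ : V}
    (h : IsPredTriangle G v z₁ z₂ z₃ p₁ p₂ p₃) :
    ∃ t₁ t₂ t₃, IsPredTriangle G v t₁ t₂ t₃ z₁ z₂ z₃ ∧ G.dist v t₁ = G.dist v z₁ + 1 := by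
  obtain ⟨h₁₂, h₁₃, h₂₃, hz₁, hz₂, hz₃⟩ := h
  have hmem : ∀ {z a b}, predecessors G v z = {a, b} → a ∈ predecessors G v z ∧
      b ∈ predecessors G v z := fun h => by simp [h]
  have hd₁₂ : G.dist v z₁ = G.dist v z₂ := by
    have := (hmem hz₁).2.2; have := (hmem hz₂).2.2; omega
  have hd₁₃ : G.dist v z₁ = G.dist v z₃ := by
    have := (hmem hz₁).1.2; have := (hmem hz₃).2.2; omega
  have hne : ∀ {z z' a} {s : Set V}, a ∈ predecessors G v z → predecessors G v z' = s →
      a ∉ s → z ≠ z' := fun ha hz' has he => has (hz' ▸ he ▸ ha)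
  have hz₁₂ : z₁ ≠ z₂ := hne (hmem hz₁).1 hz₂ (by simp [h₁₂.symm, h₂₃])
  have hz₁₃ : z₁ ≠ z₃ := hne (hmem hz₁).2 hz₃ (by simp [h₁₃.symm, h₂₃.symm])
  have hz₂₃ : z₂ ≠ z₃ := hne (hmem hz₂).2 hz₃ (by simp [h₁₃.symm, h₂₃.symm])
  obtain ⟨t₁, ht₁, hdt₁⟩ := exists_predecessors_eq_pair_of_inter_eq_singleton hq hind hpred
    hz₂₃ (hd₁₂.symm.trans hd₁₃) (p := p₁) (by rw [hz₂, hz₃]; ext; simp; grind)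
  obtain ⟨t₂, ht₂, -⟩ := exists_predecessors_eq_pair_of_inter_eq_singleton hq hind hpred
    hz₁₃ hd₁₃ (p := p₂) (by rw [hz₁, hz₃]; ext; simp; grind)
  obtain ⟨t₃, ht₃, -⟩ := exists_predecessors_eq_pair_of_inter_eq_singleton hq hind hpred
    hz₁₂ hd₁₂ (p := p₃) (by rw [hz₁, hz₂]; ext; simp; grind)
  exact ⟨t₁, t₂, t₃, ⟨hz₁₂, hz₁₃, hz₂₃, ht₁, ht₂, ht₃⟩, by omega⟩

theorem not_isPredTriangle (hq : qGraph G = 2) (hind : IndependentLevels G v)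
    (hpred : TwoPredecessors G v) {z₁ z₂ z₃ p₁ p₂ p₃ : V} :
    ¬ IsPredTriangle G v z₁ z₂ z₃ p₁ p₂ p₃ := by
  intro h
  suffices ∀ n z₁ z₂ z₃ p₁ p₂ p₃, IsPredTriangle G v z₁ z₂ z₃ p₁ p₂ p₃ →
      graphEccent G v < G.dist v z₁ + n → False from
    this (graphEccent G v + 1) _ _ _ _ _ _ h (by omega)
  intro n
  induction n with
  | zero =>
    exact fun z₁ _ _ _ _ _ _ hlt => absurd (dist_le_graphEccent (G := G) (v := v) z₁) (by omega)
  | succ n ih =>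
    intro _ _ _ _ _ _ h hlt
    obtain ⟨t₁, t₂, t₃, ht, hdt⟩ := h.exists_succ hq hind hpred
    exact ih _ _ _ _ _ _ ht (by omega)

theorem exists_common_succ_of_level_eq_pair (hq : qGraph G = 2) (hind : IndependentLevels G v)
    (hpred : TwoPredecessors G v) {k : ℕ} {c d w z z' : V}
    (hcd : c ≠ d) (hN : {y | G.dist v y = k} = {c, d}) (hw : G.dist v w + 1 = k)
    (hwc : G.Adj w c) (hwd : G.Adj w d) (hz : G.dist v z = k + 1) (hz' : G.dist v z' = k + 1)
    (hzz' : z ≠ z') : ∃ t, G.Adj z t ∧ G.Adj z' t ∧ G.dist v t = k + 2 := by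
  obtain ⟨t, hzt, hz't, ht⟩ := exists_common_succ_of_predecessors_eq hq hind hzz' hcd
    (hz.trans hz'.symm) (by omega) (hpred.predecessors_eq_of_level_eq_pair (by omega) hcd hN hz)
    (hpred.predecessors_eq_of_level_eq_pair (by omega) hcd hN hz') hwc hwd
  exact ⟨t, hzt, hz't, by omega⟩

theorem eq_or_eq_of_level_eq_pair (hq : qGraph G = 2) (hind : IndependentLevels G v)
    (hpred : TwoPredecessors G v) {k : ℕ} {c d w a b x : V}
    (hcd : c ≠ d) (hN : {y | G.dist v y = k} = {c, d}) (hw : G.dist v w + 1 = k)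
    (hwc : G.Adj w c) (hwd : G.Adj w d) (hab : a ≠ b) (ha : G.dist v a = k + 1)
    (hb : G.dist v b = k + 1) (hx : G.dist v x = k + 1) : x = a ∨ x = b := by
  by_contra! hxab
  have hsucc : ∀ {y y'}, G.dist v y = k + 1 → G.dist v y' = k + 1 → y ≠ y' →
      ∃ t, predecessors G v t = {y, y'} := fun hy hy' hyy' => by
    obtain ⟨t, hyt, hy't, ht⟩ :=
      exists_common_succ_of_level_eq_pair hq hind hpred hcd hN hw hwc hwd hy hy' hyy'
    exact ⟨t, hpred.predecessors_eq_pair (by omega) hyy' ⟨hyt.symm, by omega⟩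
      ⟨hy't.symm, by omega⟩⟩
  obtain ⟨t₁, ht₁⟩ := hsucc ha hb hab
  obtain ⟨t₂, ht₂⟩ := hsucc hx hb hxab.2
  obtain ⟨t₃, ht₃⟩ := hsucc hx ha hxab.1
  exact not_isPredTriangle hq hind hpred (z₁ := t₁) ⟨hxab.1, hxab.2, hab, ht₁, ht₂, ht₃⟩

end

/-- `c k`, for `k < 2 * m`, is vertex `k` of a (not necessarily induced) copy of `doubleCandle m`
in `G`; the values of `c` from `2 * m` on play no role. -/
structure IsCandle {V : Type*} (G : SimpleGraph V) (m : ℕ) (c : ℕ → V) : Prop where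
  injOn : Set.InjOn c (Set.Iio (2 * m))
  adj : ∀ k k', k' < 2 * m → (k + 1) / 2 + 1 = (k' + 1) / 2 → G.Adj (c k) (c k')

section

variable {V : Type*} {G : SimpleGraph V} {v : V} {m : ℕ} {c : ℕ → V}

theorem exists_isCandle_of_iso (hm : 0 < m) {s : Set V} (f : doubleCandle m ≃g G.induce s) :
    ∃ c : ℕ → V, IsCandle G m c ∧ ∀ k (hk : k < 2 * m), c k = f ⟨k, hk⟩ := by
  refine ⟨fun k => f ⟨min k (2 * m - 1), by omega⟩,
    ⟨fun k hk k' hk' h => ?_, fun k k' hk' hlev => ?_⟩, fun k hk => ?_⟩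
  · have := Fin.val_eq_of_eq (f.injective (Subtype.ext h))
    simp only [Set.mem_Iio] at hk hk'
    simp only at this
    omega
  · refine (f.map_rel_iff (a := ⟨min k (2 * m - 1), by omega⟩)
      (b := ⟨min k' (2 * m - 1), by omega⟩)).mpr ?_
    rw [doubleCandle, SimpleGraph.fromRel_adj]
    refine ⟨fun h => ?_, Or.inl ?_⟩
    · have := Fin.val_eq_of_eq h
      simp only at this
      omega
    · simp only
      omega
  · simp only [show min k (2 * m - 1) = k by omega]

theorem IsCandle.ne (hc : IsCandle G m c) {k k' : ℕ} (hk : k < 2 * m) (hk' : k' < 2 * m)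
    (h : k ≠ k') : c k ≠ c k' :=
  fun he => h (hc.injOn (Set.mem_Iio.mpr hk) (Set.mem_Iio.mpr hk') he)

theorem IsCandle.dist_le (hc : IsCandle G m c) (hc0 : c 0 = v) :
    ∀ k < 2 * m, G.dist v (c k) ≤ (k + 1) / 2 := by
  intro k
  induction k using Nat.strong_induction_on with
  | _ k ih =>
    intro hk
    rcases Nat.eq_zero_or_pos k with rfl | hkpos
    · simp [hc0]
    obtain ⟨k₀, hk₀, hlev⟩ : ∃ k₀ < k, (k₀ + 1) / 2 + 1 = (k + 1) / 2 :=
      ⟨if k ≤ 2 then 0 else k - 2, by split <;> omega, by split <;> omega⟩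
    have := dist_le_dist_add_one_of_adj (v := v) (hc.adj k₀ k hk hlev)
    have := ih k₀ hk₀ (by omega)
    omega

theorem IsCandle.dist_eq (hconn : G.Connected) (hc : IsCandle G m c) (hc0 : c 0 = v) {k : ℕ}
    (hk : k < 2 * m)
    (hlow : ∀ l, l + 1 < (k + 1) / 2 →
      {y | G.dist v y = l + 1} = {c (2 * l + 1), c (2 * l + 2)}) :
    G.dist v (c k) = (k + 1) / 2 := by
  refine le_antisymm (hc.dist_le hc0 k hk) (not_lt.mp fun hlt => ?_)
  rcases hl : G.dist v (c k) with _ | l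
  · exact hc.ne hk (by omega) (by omega) ((hconn.dist_eq_zero_iff.mp hl).symm.trans hc0.symm)
  · have hmem : c k ∈ ({c (2 * l + 1), c (2 * l + 2)} : Set V) := hlow l (by omega) ▸ hl
    rcases hmem with h | h <;> exact hc.ne hk (by omega) (by omega) h

end

section

variable {V : Type*} [Fintype V] [DecidableEq V] {G : SimpleGraph V} {v : V} {m : ℕ}
  {c : ℕ → V}

theorem IsCandle.level_eq_pair (hq : qGraph G = 2) (hconn : G.Connected)
    (hind : IndependentLevels G v) (hpred : TwoPredecessors G v)
    (hdeg : (G.neighborSet v).ncard = 2) (hc : IsCandle G m c) (hc0 : c 0 = v) :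
    ∀ l, l + 1 < m → {y | G.dist v y = l + 1} = {c (2 * l + 1), c (2 * l + 2)} := by
  intro l
  induction l using Nat.strong_induction_on with
  | _ l ih =>
    intro hl
    have hdist : ∀ k < 2 * m, (k + 1) / 2 ≤ l + 1 → G.dist v (c k) = (k + 1) / 2 :=
      fun k hk hkl => hc.dist_eq hconn hc0 hk fun l' hl' => ih l' (by omega) (by omega)
    have hne : c (2 * l + 1) ≠ c (2 * l + 2) := hc.ne (by omega) (by omega) (by omega)
    have hsub : {c (2 * l + 1), c (2 * l + 2)} ⊆ {y | G.dist v y = l + 1} :=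
      Set.pair_subset ((hdist _ (by omega) (by omega)).trans (by omega))
        ((hdist _ (by omega) (by omega)).trans (by omega))
    rcases l with _ | l
    · have hN : {y | G.dist v y = 1} = G.neighborSet v := by
        ext
        exact SimpleGraph.dist_eq_one_iff_adj
      refine (Set.eq_of_subset_of_ncard_le hsub ?_ (hN ▸ Set.finite_of_ncard_ne_zero ?_)).symm
      · rw [hN, hdeg, Set.ncard_pair hne]
      · rw [hdeg]
        norm_num
    · refine Set.Subset.antisymm (fun x hx => ?_) hsub
      exact eq_or_eq_of_level_eq_pair hq hind hpred (hc.ne (by omega) (by omega) (by omega))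
        (ih l (by omega) (by omega)) (by rw [hdist (2 * l) (by omega) (by omega)]; omega)
        (hc.adj (2 * l) _ (by omega) (by omega)) (hc.adj (2 * l) _ (by omega) (by omega)) hne
        (hsub (Set.mem_insert _ _)) (hsub (Set.mem_insert_of_mem _ rfl)) hx

theorem IsCandle.dist_last (hq : qGraph G = 2) (hconn : G.Connected)
    (hind : IndependentLevels G v) (hpred : TwoPredecessors G v)
    (hdeg : (G.neighborSet v).ncard = 2) (hc : IsCandle G m c) (hc0 : c 0 = v) (hm : 0 < m) :
    G.dist v (c (2 * m - 1)) = m :=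
  (hc.dist_eq hconn hc0 (by omega) fun l hl =>
    hc.level_eq_pair hq hconn hind hpred hdeg hc0 l (by omega)).trans (by omega)

theorem IsCandle.exists_eq (hq : qGraph G = 2) (hconn : G.Connected)
    (hind : IndependentLevels G v) (hpred : TwoPredecessors G v)
    (hdeg : (G.neighborSet v).ncard = 2) (hc : IsCandle G m c) (hc0 : c 0 = v) (hm : 2 ≤ m)
    (hnosucc : ¬ ∃ w, G.Adj (c (2 * m - 1)) w ∧ G.dist v w = m + 1) (x : V) :
    ∃ k < 2 * m, c k = x := by
  have hlevels := hc.level_eq_pair hq hconn hind hpred hdeg hc0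
  have hlast := hc.dist_last hq hconn hind hpred hdeg hc0 (by omega)
  obtain ⟨n, rfl⟩ : ∃ n, m = n + 2 := ⟨m - 2, by omega⟩
  rw [show 2 * (n + 2) - 1 = 2 * n + 3 by omega] at hnosucc hlast
  have htop : ∀ y, G.dist v y = n + 2 → y = c (2 * n + 3) := fun y hy => by
    by_contra hne
    obtain ⟨t, -, ht, hdt⟩ := exists_common_succ_of_level_eq_pair hq hind hpred
      (hc.ne (by omega) (by omega) (by omega)) (hlevels n (by omega)) (w := c (2 * n))
      (by rw [hc.dist_eq hconn hc0 (by omega) fun l hl => hlevels l (by omega)]; omega)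
      (hc.adj (2 * n) _ (by omega) (by omega)) (hc.adj (2 * n) _ (by omega) (by omega)) hy hlast
      hne
    exact hnosucc ⟨t, ht, hdt⟩
  have hbound : ∀ y, G.dist v y < n + 3 := dist_lt_of_forall_dist_ne hconn fun y hy => by
    obtain ⟨w, hyw, hw⟩ := predecessors_nonempty hconn (v := v) (z := y) (by omega)
    exact hnosucc ⟨y, htop w (by omega) ▸ hyw.symm, hy⟩
  rcases hx : G.dist v x with _ | l
  · exact ⟨0, by omega, hc0.trans (hconn.dist_eq_zero_iff.mp hx)⟩
  rcases (show l + 1 < n + 2 ∨ l + 1 = n + 2 by have := hbound x; omega) with hl | hl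
  · have hmem : x ∈ ({c (2 * l + 1), c (2 * l + 2)} : Set V) := hlevels l hl ▸ hx
    rcases hmem with h | h
    · exact ⟨2 * l + 1, by omega, h.symm⟩
    · exact ⟨2 * l + 2, by omega, h.symm⟩
  · exact ⟨2 * n + 3, by omega, (htop x (hx.trans hl)).symm⟩

end

/-- Lemma (candles, part (a)). Let `G` be connected on `n ≥ 3` vertices with
`q(G) = 2`, and let `v` be a vertex of degree `2` such that every vertex in
`N_i(v)` for `2 ≤ i ≤ ε(v)` has exactly two predecessors, and every `N_i(v)` is
independent. If `G` contains an induced subgraph (on a vertex set `s`) isomorphic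
to a double-ended candle with one end mapped to `v` and the other end mapped to a
vertex `u ∈ N_j(v)` with no successors, then this subgraph is all of `G`. -/
theorem stmt13 {V : Type*} [Fintype V] [DecidableEq V] (G : SimpleGraph V)
    (hconn : G.Connected) (hq : qGraph G = 2)
    (v : V) (hdeg : (G.neighborSet v).ncard = 2)
    (hpred : ∀ i : ℕ, 2 ≤ i → i ≤ graphEccent G v → ∀ u : V, G.dist v u = i →
      {w : V | G.Adj u w ∧ G.dist v w = i - 1}.ncard = 2)
    (hind : ∀ (i : ℕ) (w₁ w₂ : V), G.dist v w₁ = i → G.dist v w₂ = i → ¬ G.Adj w₁ w₂)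
    (m : ℕ) (hm : 2 ≤ m) (s : Set V)
    (f : doubleCandle m ≃g G.induce s)
    (u : V) (j : ℕ) (hu : G.dist v u = j)
    (hend0 : ((f ⟨0, by omega⟩ : s) : V) = v)
    (hendk : ((f ⟨2 * m - 1, by omega⟩ : s) : V) = u)
    (hnosucc : ¬ ∃ w : V, G.Adj u w ∧ G.dist v w = j + 1) :
    s = Set.univ := by
  have hind' : IndependentLevels G v := fun w₁ w₂ h => hind _ w₁ w₂ h rfl
  have hpred' : TwoPredecessors G v := twoPredecessors_of_ncard_eq_two hpred
  obtain ⟨c, hc, hcf⟩ := exists_isCandle_of_iso (by omega) f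
  have hc0 : c 0 = v := (hcf 0 _).trans hend0
  have hcu : c (2 * m - 1) = u := (hcf _ _).trans hendk
  have hj : j = m := hu ▸ hcu ▸ hc.dist_last hq hconn hind' hpred' hdeg hc0 (by omega)
  refine Set.eq_univ_of_forall fun x => ?_
  obtain ⟨k, hk, rfl⟩ :=
    hc.exists_eq hq hconn hind' hpred' hdeg hc0 hm (hcu ▸ hj ▸ hnosucc) x
  exact hcf k hk ▸ (f ⟨k, hk⟩).2
end

section
/- For a finite simple graph G, the set S(G) contains a combinatorially orthogonal matrix if and only if the matrix A(G) + I is combinatorially orthogonal, where A(G) is the adjacency matrix of G over ℝ and I is the identity matrix. -/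
open Matrix

/-- Two vectors are combinatorially orthogonal if the number of indices where both
are nonzero is not equal to `1`. -/
def CombOrthVec {n : Type*} (x y : n → ℝ) : Prop :=
  {i : n | x i ≠ 0 ∧ y i ≠ 0}.ncard ≠ 1

/-- A square matrix is combinatorially orthogonal if every pair of distinct rows is
combinatorially orthogonal and every pair of distinct columns is combinatorially
orthogonal. -/
def CombOrthMatrix {n : Type*} (A : Matrix n n ℝ) : Prop :=
  (∀ i j : n, i ≠ j → CombOrthVec (A i) (A j)) ∧
  (∀ i j : n, i ≠ j → CombOrthVec (fun k => A k i) (fun k => A k j))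

/-!
If `i` and `j` are adjacent, both `i` and `j` lie in the common support of rows `i` and `j` of
`A(G) + I`, so these rows are combinatorially orthogonal for free. If they are not adjacent, that
common support avoids `i` and `j` and is therefore the same for every matrix with the zero pattern
of `G` off the diagonal, so it is the same in `A(G) + I` as in any `A ∈ S(G)`. Symmetry turns
columns into rows.
-/

theorem SimpleGraph.adjMatrix_add_one_apply_ne_zero_iff {V R : Type*} [DecidableEq V]
    [NonAssocSemiring R] [Nontrivial R] (G : SimpleGraph V) [DecidableRel G.Adj] (i j : V) :
    (G.adjMatrix R + 1) i j ≠ 0 ↔ i = j ∨ G.Adj i j := by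
  by_cases h : i = j
  · subst h
    simp
  · simp [Matrix.one_apply_ne h, h]

theorem SimpleGraph.isSymm_adjMatrix_add_one {V R : Type*} [DecidableEq V] [Zero R] [One R]
    [Add R] (G : SimpleGraph V) [DecidableRel G.Adj] : (G.adjMatrix R + 1).IsSymm :=
  G.isSymm_adjMatrix.add isSymm_one

theorem CombOrthVec.of_two_common_nonzero {n : Type*} {x y : n → ℝ} {i j : n} (hij : i ≠ j)
    (hi : x i ≠ 0 ∧ y i ≠ 0) (hj : x j ≠ 0 ∧ y j ≠ 0) : CombOrthVec x y := by
  intro hcard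
  obtain ⟨a, ha⟩ := Set.ncard_eq_one.mp hcard
  have hia : i = a := by simpa [ha] using Set.ext_iff.mp ha i |>.mp hi
  have hja : j = a := by simpa [ha] using Set.ext_iff.mp ha j |>.mp hj
  exact hij (hia.trans hja.symm)

theorem combOrthVec_row_iff_of_offDiag {n : Type*} {A B : Matrix n n ℝ}
    (hAB : ∀ i j, i ≠ j → (A i j ≠ 0 ↔ B i j ≠ 0)) {i j : n} (hij : i ≠ j)
    (hAij : A i j = 0) (hAji : A j i = 0) :
    CombOrthVec (A i) (A j) ↔ CombOrthVec (B i) (B j) := by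
  have hBij : B i j = 0 := not_not.mp fun h => (hAB i j hij).mpr h hAij
  have hBji : B j i = 0 := not_not.mp fun h => (hAB j i hij.symm).mpr h hAji
  suffices hsupp : {k | A i k ≠ 0 ∧ A j k ≠ 0} = {k | B i k ≠ 0 ∧ B j k ≠ 0} by
    simp only [CombOrthVec, hsupp]
  ext k
  by_cases hki : k = i
  · subst hki
    simp [hAji, hBji]
  by_cases hkj : k = j
  · subst hkj
    simp [hAij, hBij]
  simp only [Set.mem_ofPred_eq, hAB i k (Ne.symm hki), hAB j k (Ne.symm hkj)]

theorem combOrthMatrix_of_isSymm {n : Type*} {A : Matrix n n ℝ} (hA : A.IsSymm)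
    (hrows : ∀ i j, i ≠ j → CombOrthVec (A i) (A j)) : CombOrthMatrix A := by
  have hcol : ∀ l, (fun k => A k l) = A l := fun l => funext (hA.apply l)
  exact ⟨hrows, fun i j hij => by simpa only [hcol] using hrows i j hij⟩

/-- `S(G)` contains a combinatorially orthogonal matrix iff `A(G) + I` is
combinatorially orthogonal. -/
theorem stmt17 {V : Type*} [Fintype V] [DecidableEq V] (G : SimpleGraph V)
    [DecidableRel G.Adj] :
    (∃ A ∈ SOfGraph G, CombOrthMatrix A) ↔ CombOrthMatrix (G.adjMatrix ℝ + 1) := by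
  have hB := G.adjMatrix_add_one_apply_ne_zero_iff (R := ℝ)
  constructor
  · rintro ⟨A, ⟨-, hpat⟩, hrows, -⟩
    refine combOrthMatrix_of_isSymm G.isSymm_adjMatrix_add_one fun i j hij => ?_
    by_cases hadj : G.Adj i j
    · exact CombOrthVec.of_two_common_nonzero hij
        ⟨(hB i i).mpr (.inl rfl), (hB j i).mpr (.inr hadj.symm)⟩
        ⟨(hB i j).mpr (.inr hadj), (hB j j).mpr (.inl rfl)⟩
    · have hAB : ∀ k l, k ≠ l → (A k l ≠ 0 ↔ (G.adjMatrix ℝ + 1) k l ≠ 0) := fun k l hkl => by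
        rw [hpat k l hkl, hB, or_iff_right hkl]
      have hAij : A i j = 0 := not_not.mp fun h => hadj ((hpat i j hij).mp h)
      have hAji : A j i = 0 := not_not.mp fun h => hadj ((hpat j i hij.symm).mp h).symm
      exact (combOrthVec_row_iff_of_offDiag hAB hij hAij hAji).mp (hrows i j hij)
  · intro h
    refine ⟨_, ⟨G.isSymm_adjMatrix_add_one, fun i j hij => ?_⟩, h⟩
    rw [hB, or_iff_right hij]
end
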